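/- arXiv:1310.6293 — 2 statements merged into one kernel-verified Lean document; each statement's English description precedes it below -/
import Mathlib

section
/- Let p be a prime element of ℤ[i] not dividing 2 (equivalently, with odd norm). Then there exists a Gaussian integer x with p ∣ (x² - i) if and only if N(p) ≡ 1 (mod 8). In other words, i is a quadratic residue modulo an odd Gaussian prime p exactly when N(p) ≡ 1 (mod 8). -/
/-!
Since `ℤ[i]` is a principal ideal domain, `F = ℤ[i]/(p)` is a finite field, with `N(p)` elements
(the norm of `p` as an element of the free `ℤ`-module `ℤ[i]`); its characteristic is odd because
`p ∤ 2`. The image of `i` has order `4` in the cyclic group `Fˣ` of order `q - 1`, `q = N(p)`,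
so Euler's criterion says it is a square iff `4 ∣ (q - 1) / 2`, i.e. iff `q ≡ 1 [MOD 8]`.
-/

namespace Zsqrtd

variable {d : ℤ}

variable (d) in
noncomputable def basis : Module.Basis (Fin 2) ℤ (ℤ√d) :=
  Module.Basis.ofEquivFun
    { toFun := fun z => ![z.re, z.im]
      invFun := fun v => ⟨v 0, v 1⟩
      map_add' := fun _ _ => by ext i; fin_cases i <;> simp
      map_smul' := fun _ _ => by ext i; fin_cases i <;> simp
      left_inv := fun _ => rfl
      right_inv := fun _ => by ext i; fin_cases i <;> rfl }

@[simp]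
theorem basis_repr (z : ℤ√d) (i : Fin 2) : (basis d).repr z i = ![z.re, z.im] i := rfl

instance : Module.Free ℤ (ℤ√d) := .of_basis (basis d)

instance : Module.Finite ℤ (ℤ√d) := .of_basis (basis d)

@[simp]
theorem basis_zero : basis d 0 = 1 := (basis d).repr.injective <| by ext i; fin_cases i <;> simp

@[simp]
theorem basis_one : basis d 1 = sqrtd := (basis d).repr.injective <| by ext i; fin_cases i <;> simp

theorem algebraNorm_eq (z : ℤ√d) : Algebra.norm ℤ z = z.norm := by
  rw [Algebra.norm_eq_matrix_det (basis d), Matrix.det_fin_two]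
  simp [Algebra.leftMulMatrix_eq_repr_mul, Zsqrtd.norm]

end Zsqrtd

theorem GaussianInt.card_quotient_span_singleton (z : GaussianInt) :
    Nat.card (GaussianInt ⧸ Ideal.span {z}) = z.norm.natAbs := by
  rw [← Submodule.cardQuot_apply, ← Ideal.absNorm_apply, Ideal.absNorm_span_singleton,
    Zsqrtd.algebraNorm_eq]

theorem GaussianInt.finite_quotient_span_singleton {z : GaussianInt} (hz : z ≠ 0) :
    Finite (GaussianInt ⧸ Ideal.span {z}) :=
  Nat.finite_of_card_ne_zero <| by simpa [card_quotient_span_singleton] using hz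

theorem Ideal.Quotient.ringChar_ne_two {R : Type*} [CommRing R] {p : R} (h2 : ¬ p ∣ 2) :
    ringChar (R ⧸ Ideal.span {p}) ≠ 2 := by
  intro h
  refine h2 (Ideal.mem_span_singleton.mp (Ideal.Quotient.eq_zero_iff_mem.mp ?_))
  rw [map_ofNat]
  simpa [h] using ringChar.Nat.cast_ringChar (R := R ⧸ Ideal.span {p})

theorem Ideal.Quotient.isSquare_mk_span_singleton_iff {R : Type*} [CommRing R] (p a : R) :
    IsSquare (Ideal.Quotient.mk (Ideal.span {p}) a) ↔ ∃ x, p ∣ x ^ 2 - a := by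
  constructor
  · rintro ⟨r, hr⟩
    obtain ⟨x, rfl⟩ := Ideal.Quotient.mk_surjective r
    exact ⟨x, Ideal.mem_span_singleton.mp (Ideal.Quotient.eq.mp (by rw [map_pow, hr, sq]))⟩
  · rintro ⟨x, hx⟩
    refine ⟨Ideal.Quotient.mk _ x, ?_⟩
    rw [← map_mul, ← sq, Ideal.Quotient.eq.mpr (Ideal.mem_span_singleton.mpr hx)]

theorem FiniteField.isSquare_iff_card_mod_eight_of_sq_eq_neg_one {F : Type*} [Field F] [Fintype F]
    (hF : ringChar F ≠ 2) {j : F} (hj : j ^ 2 = -1) :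
    IsSquare j ↔ Fintype.card F % 8 = 1 := by
  have hj0 : j ≠ 0 := by rintro rfl; simp at hj
  have hord : orderOf j = 2 ^ 2 :=
    orderOf_eq_prime_pow (by rw [pow_one, hj]; exact Ring.neg_one_ne_one_of_char_ne_two hF)
      (by rw [pow_succ, pow_mul, pow_one, hj, neg_one_sq])
  rw [FiniteField.isSquare_iff hF hj0, ← orderOf_dvd_iff_pow_eq_one, hord]
  have := FiniteField.odd_card_of_char_ne_two hF
  omega

/-- `i` is a quadratic residue modulo an odd Gaussian prime `p` exactly when
`N(p) ≡ 1 (mod 8)`. -/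
theorem stmt_3 (p : GaussianInt) (hp : Prime p) (h2 : ¬ p ∣ 2) :
    (∃ x : GaussianInt, p ∣ (x ^ 2 - ⟨0, 1⟩)) ↔ p.norm ≡ 1 [ZMOD 8] := by
  have : (Ideal.span {p}).IsMaximal := PrincipalIdealRing.isMaximal_of_irreducible hp.irreducible
  let := Ideal.Quotient.field (Ideal.span {p})
  have := GaussianInt.finite_quotient_span_singleton hp.ne_zero
  let := Fintype.ofFinite (GaussianInt ⧸ Ideal.span {p})
  have hi : Ideal.Quotient.mk (Ideal.span {p}) ⟨0, 1⟩ ^ 2 = -1 := by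
    rw [← map_pow, show (⟨0, 1⟩ : GaussianInt) ^ 2 = -1 by ext <;> simp [sq], map_neg, map_one]
  rw [← Ideal.Quotient.isSquare_mk_span_singleton_iff,
    FiniteField.isSquare_iff_card_mod_eight_of_sq_eq_neg_one (Ideal.Quotient.ringChar_ne_two h2) hi,
    Fintype.card_eq_nat_card, GaussianInt.card_quotient_span_singleton, Int.ModEq]
  have := GaussianInt.norm_nonneg p
  omega
end

section
/- For every prime element p of ℤ[i] with N(p) ≡ 1 (mod 8), there exist Gaussian integers x and y such that p = x² + i·y². -/
/-!
The prime `p` lies over a rational prime `q`: either `N(p) = q ≡ 1 (mod 8)`, or `p` is associated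
to `q`, which is then inert, so `q ≡ 3 (mod 4)`. In both cases `2` or `-2` is a square mod `q`, say
`c² ≡ ±2`, and then `((1 ∓ i) c / 2)² ≡ -i`; hence `p ∣ z² + i` for some `z`.

The rest is Fermat's descent for the form `x² + i y²`, whose values are closed under multiplication.
If `p m = x² + i y²` with `0 < N(m) < N(p)`, reduce `x, y` modulo `m` to `x', y'` with
`2 N(x'), 2 N(y') ≤ N(m)`. Then `x'² + i y'² = m r` with `0 < N(r) < N(m)`: strictness and `r ≠ 0`
both come from `i` not being a square in `ℚ(i)`. Multiplying the two representations and dividing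
by `m²` represents `p r`. The descent stops at a unit `m`, and every unit is a value of the form.
-/

local notation "ℤ[i]" => GaussianInt
local notation "ι" => (⟨0, 1⟩ : GaussianInt)

namespace Zsqrtd

theorem norm_pow {d : ℤ} (x : ℤ√d) (n : ℕ) : (x ^ n).norm = x.norm ^ n :=
  map_pow normMonoidHom x n

theorem norm_add_add_norm_sub {d : ℤ} (a b : ℤ√d) :
    (a + b).norm + (a - b).norm = 2 * a.norm + 2 * b.norm := by
  simp only [norm_def, re_add, im_add, re_sub, im_sub]
  ring

end Zsqrtd

namespace GaussianInt

theorem two_mul_norm_mod_le (x : ℤ[i]) {y : ℤ[i]} (hy : y ≠ 0) : 2 * (x % y).norm ≤ y.norm := by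
  have hy' : (y : ℂ) ≠ 0 := by rwa [Ne, toComplex_eq_zero]
  have hround (t : ℝ) : (t - round t) * (t - round t) ≤ 1 / 4 := by
    nlinarith [abs_sub_round t, abs_nonneg (t - round t), abs_mul_abs_self (t - round t)]
  have hquot : Complex.normSq ((x / y : ℂ) - ((x / y : ℤ[i]) : ℂ)) ≤ 1 / 2 := by
    rw [Complex.normSq_apply]
    simp only [Complex.sub_re, Complex.sub_im, toComplex_re_div, toComplex_im_div]
    linarith [hround (x / y : ℂ).re, hround (x / y : ℂ).im]
  have hmod : ((x % y).norm : ℝ) =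
      Complex.normSq (y : ℂ) * Complex.normSq ((x / y : ℂ) - ((x / y : ℤ[i]) : ℂ)) := by
    rw [← Complex.normSq_mul, mul_sub, mul_div_cancel₀ _ hy', intCast_real_norm, mod_def]
    simp
  have : (2 * (x % y).norm : ℝ) ≤ y.norm := by
    rw [hmod, intCast_real_norm]
    nlinarith [Complex.normSq_nonneg (y : ℂ)]
  exact_mod_cast this

theorem sq_ne_i (c : ℤ[i]) : c ^ 2 ≠ ι := by
  intro h
  have him := congrArg Zsqrtd.im h
  simp only [pow_two, Zsqrtd.im_mul] at him
  have : (2 : ℤ) ∣ 1 := ⟨c.re * c.im, by linarith⟩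
  omega

theorem eq_zero_of_sq_eq_i_mul_sq {a b : ℤ[i]} (h : a ^ 2 = ι * b ^ 2) : b = 0 := by
  by_contra hb
  obtain ⟨c, rfl⟩ := (IsIntegrallyClosed.pow_dvd_pow_iff two_ne_zero).mp (Dvd.intro_left _ h.symm)
  refine sq_ne_i c (mul_left_cancel₀ (pow_ne_zero 2 hb) ?_)
  linear_combination h

theorem i_sq : ι ^ 2 = -1 := rfl

theorem norm_i_mul_sq (y : ℤ[i]) : (ι * y ^ 2).norm = y.norm ^ 2 := by
  rw [Zsqrtd.norm_mul, Zsqrtd.norm_pow, show (ι : ℤ[i]).norm = 1 from rfl, one_mul]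

theorem sq_add_i_mul_sq_eq_zero {x y : ℤ[i]} (h : x ^ 2 + ι * y ^ 2 = 0) : x = 0 ∧ y = 0 := by
  have hy : ι * y = 0 := eq_zero_of_sq_eq_i_mul_sq (a := x) (by linear_combination h - ι * y ^ 2 * i_sq)
  have hy : y = 0 := (mul_eq_zero.mp hy).resolve_left (by decide)
  subst hy
  exact ⟨pow_eq_zero_iff two_ne_zero |>.mp (by simpa using h), rfl⟩

theorem norm_sq_add_i_mul_sq_lt {x y : ℤ[i]} {M : ℤ} (hM : 0 < M) (hx : 2 * x.norm ≤ M)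
    (hy : 2 * y.norm ≤ M) : (x ^ 2 + ι * y ^ 2).norm < M ^ 2 := by
  by_cases hxy : x ^ 2 = ι * y ^ 2
  · obtain rfl := eq_zero_of_sq_eq_i_mul_sq hxy
    obtain rfl : x = 0 := pow_eq_zero_iff two_ne_zero |>.mp (by simpa using hxy)
    simp [sq_pos_of_pos hM]
  · have hsub : 0 < (x ^ 2 - ι * y ^ 2).norm := norm_pos.mpr (sub_ne_zero.mpr hxy)
    have hpar := Zsqrtd.norm_add_add_norm_sub (x ^ 2) (ι * y ^ 2)
    rw [norm_i_mul_sq, Zsqrtd.norm_pow] at hpar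
    nlinarith [norm_nonneg x, norm_nonneg y]

def IsSqAddISq (z : ℤ[i]) : Prop := ∃ x y : ℤ[i], z = x ^ 2 + ι * y ^ 2

theorem sq_add_i_mul_sq_mul (x y u v : ℤ[i]) :
    (x ^ 2 + ι * y ^ 2) * (u ^ 2 + ι * v ^ 2) = (x * u + ι * y * v) ^ 2 + ι * (y * u - x * v) ^ 2 := by
  ring

theorem IsSqAddISq.mul {z w : ℤ[i]} (hz : IsSqAddISq z) (hw : IsSqAddISq w) :
    IsSqAddISq (z * w) := by
  obtain ⟨x, y, rfl⟩ := hz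
  obtain ⟨u, v, rfl⟩ := hw
  exact ⟨_, _, sq_add_i_mul_sq_mul x y u v⟩

theorem eq_one_or_neg_one_or_i_or_neg_i_of_isUnit {u : ℤ[i]} (hu : IsUnit u) :
    u = 1 ∨ u = -1 ∨ u = ι ∨ u = -ι := by
  have h := (Zsqrtd.norm_eq_one_iff' (by norm_num) u).mpr hu
  obtain ⟨a, b⟩ := u
  simp only [Zsqrtd.norm_def] at h
  have ha : -1 ≤ a ∧ a ≤ 1 := by constructor <;> nlinarith [sq_nonneg b]
  have hb : -1 ≤ b ∧ b ≤ 1 := by constructor <;> nlinarith [sq_nonneg a]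
  obtain ⟨ha1, ha2⟩ := ha
  obtain ⟨hb1, hb2⟩ := hb
  interval_cases a <;> interval_cases b <;> simp_all <;> decide

theorem isSqAddISq_of_isUnit {u : ℤ[i]} (hu : IsUnit u) : IsSqAddISq u := by
  rcases eq_one_or_neg_one_or_i_or_neg_i_of_isUnit hu with rfl | rfl | rfl | rfl
  exacts [⟨1, 0, by ring⟩, ⟨ι, 0, by rw [i_sq]; ring⟩, ⟨0, 1, by ring⟩,
    ⟨0, ι, by linear_combination -ι * i_sq⟩]

theorem exists_eq_add_mul_two_mul_norm_le (x : ℤ[i]) {m : ℤ[i]} (hm : m ≠ 0) :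
    ∃ x' u : ℤ[i], x = x' + m * u ∧ 2 * x'.norm ≤ m.norm :=
  ⟨x % m, x / m, (EuclideanDomain.mod_add_div x m).symm, two_mul_norm_mod_le x hm⟩

theorem norm_lt_of_mul_eq {m r x y : ℤ[i]} (hm : m ≠ 0) (h : m * r = x ^ 2 + ι * y ^ 2)
    (hx : 2 * x.norm ≤ m.norm) (hy : 2 * y.norm ≤ m.norm) : r.norm < m.norm := by
  have hlt := norm_sq_add_i_mul_sq_lt (norm_pos.mpr hm) hx hy
  rw [← h, Zsqrtd.norm_mul, sq] at hlt
  exact lt_of_mul_lt_mul_left hlt (norm_nonneg m)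

theorem exists_isSqAddISq_mul_of_lt {p m : ℤ[i]} (hp : Prime p) (hm0 : m ≠ 0) (hm : ¬IsUnit m)
    (hmp : m.norm < p.norm) (h : IsSqAddISq (p * m)) :
    ∃ r : ℤ[i], r ≠ 0 ∧ r.norm < m.norm ∧ IsSqAddISq (p * r) := by
  obtain ⟨x, y, hxy⟩ := h
  obtain ⟨x', u, hx, hx'⟩ := exists_eq_add_mul_two_mul_norm_le x hm0
  obtain ⟨y', v, hy, hy'⟩ := exists_eq_add_mul_two_mul_norm_le y hm0
  obtain ⟨r, hr⟩ : ∃ r, m * r = x' ^ 2 + ι * y' ^ 2 :=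
    ⟨p - (2 * x' * u + m * u ^ 2 + ι * (2 * y' * v + m * v ^ 2)), by
      linear_combination hxy + (x + x' + m * u) * hx + ι * (y + y' + m * v) * hy⟩
  refine ⟨r, ?r0, ?rlt, r + u * x' + ι * v * y', v * x' - u * y', ?rep⟩
  case r0 =>
    rintro rfl
    obtain ⟨rfl, rfl⟩ := sq_add_i_mul_sq_eq_zero (by rw [← hr, mul_zero])
    have hpm : p = m * (u ^ 2 + ι * v ^ 2) :=
      mul_left_cancel₀ hm0 (by linear_combination hxy + (x + m * u) * hx + ι * (y + m * v) * hy)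
    have hunit := (hp.irreducible.isUnit_or_isUnit hpm).resolve_left hm
    rw [hpm, Zsqrtd.norm_mul, (Zsqrtd.norm_eq_one_iff' (by norm_num) _).mpr hunit, mul_one] at hmp
    exact hmp.false
  case rlt => exact norm_lt_of_mul_eq hm0 hr hx' hy'
  case rep =>
    have hX : x * x' + ι * y * y' = m * (r + u * x' + ι * v * y') := by
      linear_combination -hr + x' * hx + ι * y' * hy
    have hY : y * x' - x * y' = m * (v * x' - u * y') := by
      linear_combination x' * hy - y' * hx
    refine mul_left_cancel₀ (pow_ne_zero 2 hm0) ?_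
    calc m ^ 2 * (p * r) = (p * m) * (m * r) := by ring
      _ = (x * x' + ι * y * y') ^ 2 + ι * (y * x' - x * y') ^ 2 := by
        rw [hxy, hr, sq_add_i_mul_sq_mul]
      _ = _ := by rw [hX, hY]; ring

theorem isSqAddISq_of_mul {p m : ℤ[i]} (hp : Prime p) (hm0 : m ≠ 0) (hmp : m.norm < p.norm)
    (h : IsSqAddISq (p * m)) : IsSqAddISq p := by
  by_cases hm : IsUnit m
  · obtain ⟨u, rfl⟩ := hm
    simpa using h.mul (isSqAddISq_of_isUnit (u⁻¹).isUnit)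
  · obtain ⟨r, hr0, hrm, hr⟩ := exists_isSqAddISq_mul_of_lt hp hm0 hm hmp h
    exact isSqAddISq_of_mul hp hr0 (hrm.trans hmp) hr
termination_by m.norm.natAbs
decreasing_by exact Int.natAbs_lt_natAbs_of_nonneg_of_lt (norm_nonneg r) hrm

theorem dvd_sq_add_i_of_dvd {q ε A : ℤ} (hε : ε ^ 2 = 1) (h : q ∣ 2 * A ^ 2 - ε) :
    (q : ℤ[i]) ∣ ((1 - ε * ι) * A) ^ 2 + ι := by
  have hε' : (ε : ℤ[i]) ^ 2 = 1 := by exact_mod_cast hε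
  have hid : ((1 - ε * ι) * A) ^ 2 + ι = -(ε * ι) * ((2 * A ^ 2 - ε : ℤ) : ℤ[i]) := by
    push_cast
    linear_combination -(A ^ 2 + ι) * hε' + ε ^ 2 * A ^ 2 * i_sq
  rw [hid]
  exact Dvd.dvd.mul_left (Int.cast_dvd_cast _ _ h) _

theorem exists_dvd_sq_add_i_of_nat_prime {q : ℕ} [Fact q.Prime] (hq2 : q ≠ 2) (hq5 : q % 8 ≠ 5) :
    ∃ z : ℤ[i], (q : ℤ[i]) ∣ z ^ 2 + ι := by
  have hodd : q % 2 = 1 := Nat.odd_iff.mp ((Fact.out : q.Prime).odd_of_ne_two hq2)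
  obtain ⟨ε, hε, c, hc⟩ : ∃ ε : ℤ, ε ^ 2 = 1 ∧ IsSquare ((2 * ε : ℤ) : ZMod q) := by
    rcases (by omega : q % 8 = 1 ∨ q % 8 = 7 ∨ q % 8 = 3) with h | h | h
    · exact ⟨1, rfl, by simpa using (ZMod.exists_sq_eq_two_iff hq2).mpr (Or.inl h)⟩
    · exact ⟨1, rfl, by simpa using (ZMod.exists_sq_eq_two_iff hq2).mpr (Or.inr h)⟩
    · exact ⟨-1, rfl, by simpa using (ZMod.exists_sq_eq_neg_two_iff hq2).mpr (Or.inr h)⟩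
  have h2 : (2 : ZMod q) ≠ 0 := Ring.two_ne_zero (by rwa [ZMod.ringChar_zmod_n])
  -- `a = c / 2` satisfies `2 * a ^ 2 = c ^ 2 / 2 = ε`
  have hA : (((2 * ((c / 2).val : ℤ) ^ 2 - ε : ℤ)) : ZMod q) = 0 := by
    push_cast at hc ⊢
    rw [ZMod.natCast_zmod_val]
    field_simp
    linear_combination -hc
  exact ⟨_, dvd_sq_add_i_of_dvd hε ((ZMod.intCast_zmod_eq_zero_iff_dvd _ _).mp hA)⟩

theorem exists_nat_prime_dvd {p : ℤ[i]} (hp : Prime p) : ∃ q : ℕ, q.Prime ∧ p ∣ (q : ℤ[i]) := by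
  have hn : p.norm.natAbs ≠ 0 := by simpa using hp.ne_zero
  have hdvd : p ∣ (p.norm.natAbs : ℤ[i]) := by
    rw [natCast_natAbs_norm, Zsqrtd.norm_eq_mul_conj]
    exact dvd_mul_right p _
  rw [← Nat.prod_primeFactorsList hn, Nat.cast_list_prod, hp.dvd_prod_iff] at hdvd
  obtain ⟨_, hmem, hpq⟩ := hdvd
  obtain ⟨q, hq, rfl⟩ := List.mem_map.mp hmem
  exact ⟨q, Nat.prime_of_mem_primeFactorsList hq, hpq⟩

theorem natAbs_norm_eq_or_associated {p : ℤ[i]} {q : ℕ} (hp : Prime p) (hq : q.Prime)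
    (hpq : p ∣ (q : ℤ[i])) : p.norm.natAbs = q ∨ Associated p (q : ℤ[i]) := by
  obtain ⟨w, hw⟩ := hpq
  have hnorm : q ^ 2 = p.norm.natAbs * w.norm.natAbs := by
    rw [sq, ← Int.natAbs_mul, ← Zsqrtd.norm_mul, ← hw, Zsqrtd.norm_natCast, Int.natAbs_mul,
      Int.natAbs_natCast]
  obtain ⟨k, hk, hpk⟩ := (Nat.dvd_prime_pow hq).mp (Dvd.intro _ hnorm.symm)
  interval_cases k
  · exact absurd (Zsqrtd.norm_eq_one_iff.mp (by simpa using hpk)) hp.not_isUnit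
  · exact Or.inl (by simpa using hpk)
  · have hw1 : w.norm.natAbs = 1 := by
      rw [hpk] at hnorm
      exact (Nat.mul_eq_left (pow_ne_zero 2 hq.ne_zero)).mp hnorm.symm
    exact Or.inr (hw ▸ associated_mul_unit_right p w (Zsqrtd.norm_eq_one_iff.mp hw1))

theorem exists_dvd_sq_add_i {p : ℤ[i]} (hp : Prime p) (h : p.norm ≡ 1 [ZMOD 8]) :
    ∃ z : ℤ[i], p ∣ z ^ 2 + ι := by
  obtain ⟨q, hq, hpq⟩ := exists_nat_prime_dvd hp
  have : Fact q.Prime := ⟨hq⟩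
  have hq : q ≠ 2 ∧ q % 8 ≠ 5 := by
    rcases natAbs_norm_eq_or_associated hp hq hpq with hN | hassoc
    · have h8 : p.norm % 8 = 1 % 8 := h
      have := Int.natAbs_of_nonneg (norm_nonneg p)
      omega
    · have := mod_four_eq_three_of_nat_prime_of_prime q (hassoc.prime hp)
      omega
  obtain ⟨z, hz⟩ := exists_dvd_sq_add_i_of_nat_prime hq.1 hq.2
  exact ⟨z, hpq.trans hz⟩

theorem isSqAddISq_of_dvd_sq_add_i {p z : ℤ[i]} (hp : Prime p) (hz : p ∣ z ^ 2 + ι) :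
    IsSqAddISq p := by
  have hp1 : p.norm ≠ 1 := fun h => hp.not_isUnit ((Zsqrtd.norm_eq_one_iff' (by norm_num) p).mp h)
  have hp2 : 2 * (1 : ℤ[i]).norm ≤ p.norm := by
    have := norm_pos.mpr hp.ne_zero
    rw [Zsqrtd.norm_one]
    omega
  obtain ⟨z', u, rfl, hz'⟩ := exists_eq_add_mul_two_mul_norm_le z hp.ne_zero
  obtain ⟨m, hm⟩ : p ∣ z' ^ 2 + ι * 1 ^ 2 :=
    (dvd_add_right (dvd_mul_right p (2 * z' * u + p * u ^ 2))).mp (by convert hz using 1; ring)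
  have hm0 : m ≠ 0 := by
    rintro rfl
    exact one_ne_zero (sq_add_i_mul_sq_eq_zero (hm.trans (mul_zero p))).2
  exact isSqAddISq_of_mul hp hm0 (norm_lt_of_mul_eq hp.ne_zero hm.symm hz' hp2) ⟨z', 1, hm.symm⟩

end GaussianInt

open GaussianInt

/-- Every Gaussian prime `p` with `N(p) ≡ 1 (mod 8)` is of the form `x² + i·y²`. -/
theorem stmt_5 (p : GaussianInt) (hp : Prime p) (h : p.norm ≡ 1 [ZMOD 8]) :
    ∃ x y : GaussianInt, p = x ^ 2 + (⟨0, 1⟩ : GaussianInt) * y ^ 2 := by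
  obtain ⟨z, hz⟩ := exists_dvd_sq_add_i hp h
  exact isSqAddISq_of_dvd_sq_add_i hp hz
end
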